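/- arXiv:0709.4537 — 3 statements merged into one kernel-verified Lean document; each statement's English description precedes it below -/
import Mathlib

section
/- For every integer n ≥ 1, the polar Legendre polynomial P_n with pole ζ ∈ ℂ satisfies ∫_{-1}^{1} (x-ζ)·P_n(x)·L_n(x) dx = 0. -/
/-!
With `Q = (X - ζ) · P_n` the defining relation reads `Q' = (n + 1) · L_n`. As `L_n ⟂ 1` for
`n ≥ 1`, `∫ Q' = 0`, i.e. `Q(1) = Q(-1)`; hence `∫ Q Q' = (Q(1)² - Q(-1)²) / 2 = 0`, and
`Q Q' = (n + 1) (x - ζ) P_n L_n`.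
-/

open Polynomial

/-- `L` is the sequence of monic Legendre polynomials: `L n` is monic of degree `n` and
orthogonal on `[-1,1]` to `x^k` for all `k < n`. -/
def IsMonicLegendre (L : ℕ → Polynomial ℝ) : Prop :=
  ∀ n : ℕ, (L n).Monic ∧ (L n).natDegree = n ∧
    ∀ k : ℕ, k < n → (∫ x in (-1:ℝ)..1, (L n).eval x * x ^ k) = 0

/-- `P` is the sequence of polar Legendre polynomials with pole `ζ` associated to `L`:
`P n` is monic of degree `n` and `(n+1)·L_n(z) = P_n(z) + (z-ζ)·P_n′(z)` for all `z ∈ ℂ`. -/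
def IsPolarLegendre (L : ℕ → Polynomial ℝ) (ζ : ℂ) (P : ℕ → Polynomial ℂ) : Prop :=
  ∀ n : ℕ, (P n).Monic ∧ (P n).natDegree = n ∧
    ∀ z : ℂ, ((n : ℂ) + 1) * ((L n).map (algebraMap ℝ ℂ)).eval z =
      (P n).eval z + (z - ζ) * ((P n).derivative.eval z)

namespace Polynomial

theorem eval_map_ofReal (p : ℝ[X]) (x : ℝ) :
    (p.map (algebraMap ℝ ℂ)).eval (x : ℂ) = ((p.eval x : ℝ) : ℂ) := by
  rw [eval_map_algebraMap]
  exact (ofReal_eval p x).symm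

theorem integral_eval_derivative_ofReal (Q : ℂ[X]) (a b : ℝ) :
    ∫ x in a..b, Q.derivative.eval (x : ℂ) = Q.eval (b : ℂ) - Q.eval (a : ℂ) :=
  intervalIntegral.integral_eq_sub_of_hasDerivAt
    (fun x _ => (Q.hasDerivAt (x : ℂ)).comp_ofReal)
    ((Q.derivative.continuous.comp Complex.continuous_ofReal).intervalIntegrable _ _)

theorem integral_eval_mul_eval_derivative_ofReal (Q : ℂ[X]) (a b : ℝ) :
    ∫ x in a..b, Q.eval (x : ℂ) * Q.derivative.eval (x : ℂ) =
      (Q.eval (b : ℂ) ^ 2 - Q.eval (a : ℂ) ^ 2) / 2 := by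
  have h := integral_eval_derivative_ofReal (Q ^ 2) a b
  simp only [derivative_sq, eval_mul, eval_C, eval_pow, intervalIntegral.integral_const_mul,
    mul_assoc] at h
  rw [← h]
  ring

end Polynomial

theorem IsMonicLegendre.integral_eq_zero {L : ℕ → ℝ[X]} (hL : IsMonicLegendre L) {n : ℕ}
    (hn : 1 ≤ n) : ∫ x in (-1 : ℝ)..1, (L n).eval x = 0 := by
  simpa using (hL n).2.2 0 hn

theorem IsPolarLegendre.derivative_X_sub_C_mul {L : ℕ → ℝ[X]} {ζ : ℂ} {P : ℕ → ℂ[X]}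
    (hP : IsPolarLegendre L ζ P) (n : ℕ) :
    ((X - C ζ) * P n).derivative = C ((n : ℂ) + 1) * (L n).map (algebraMap ℝ ℂ) := by
  refine Polynomial.funext fun z => ?_
  simp only [derivative_mul, derivative_sub, derivative_X, derivative_C, sub_zero, one_mul,
    eval_add, eval_mul, eval_sub, eval_X, eval_C, (hP n).2.2 z]

/-- For `n ≥ 1`: `∫_{-1}^{1} (x-ζ)·P_n(x)·L_n(x) dx = 0`. -/
theorem polar_legendre_integral_same
    (L : ℕ → Polynomial ℝ) (ζ : ℂ) (P : ℕ → Polynomial ℂ)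
    (hL : IsMonicLegendre L) (hP : IsPolarLegendre L ζ P)
    (n : ℕ) (hn : 1 ≤ n) :
    (∫ x in (-1:ℝ)..1,
        ((x : ℂ) - ζ) * (P n).eval (x : ℂ) * (((L n).eval x : ℝ) : ℂ)) = 0 := by
  set Q := (X - C ζ) * P n
  have hQ' (x : ℝ) : Q.derivative.eval (x : ℂ) = ((n : ℂ) + 1) * (((L n).eval x : ℝ) : ℂ) := by
    rw [hP.derivative_X_sub_C_mul, eval_mul, eval_C, eval_map_ofReal]
  have hQ_endpoints : Q.eval 1 = Q.eval (-1) := by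
    have h := Q.integral_eval_derivative_ofReal (-1) 1
    simp only [hQ', intervalIntegral.integral_const_mul, intervalIntegral.integral_ofReal,
      hL.integral_eq_zero hn, Complex.ofReal_zero, mul_zero, Complex.ofReal_one,
      Complex.ofReal_neg] at h
    exact sub_eq_zero.mp h.symm
  have hQQ' : ((n : ℂ) + 1) * ∫ x in (-1 : ℝ)..1,
      ((x : ℂ) - ζ) * (P n).eval (x : ℂ) * (((L n).eval x : ℝ) : ℂ) = 0 := by
    rw [← intervalIntegral.integral_const_mul]
    have h := Q.integral_eval_mul_eval_derivative_ofReal (-1) 1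
    simp only [hQ', Complex.ofReal_one, Complex.ofReal_neg, hQ_endpoints, sub_self,
      zero_div] at h
    simpa only [Q, eval_mul, eval_sub, eval_X, eval_C, mul_comm, mul_left_comm, mul_assoc]
      using h
  exact (mul_eq_zero.mp hQQ').resolve_left (by exact_mod_cast n.succ_ne_zero)
end

section
/- Let ζ ∈ ℂ and Δ_ζ = sup_{x ∈ [-1,1]} |ζ - x|. Then for every n ≥ 1, every zero z of the polar Legendre polynomial P_n with pole ζ satisfies |z| ≤ Δ_ζ + 1. -/
/-!
Let `Φ(x) = (n + 1) ∫_{-1}^x L_n`. The defining relation of `P_n` says that `(X - ζ) P_n` and `Φ`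
have the same derivative, so `(z - ζ) P_n(z) - Φ(z)` is constant; evaluating at a zero `z` of
`P_n` and at `ζ` gives `Φ(z) = Φ(ζ)`. Integrating by parts, `Φ` vanishes at `±1` and is orthogonal
on `[-1, 1]` to all polynomials of degree `< n - 1`, so the classical sign-change argument puts all
`n + 1` roots `a_i` of the monic polynomial `Φ` in `[-1, 1]`. Hence
`(|z| - 1)^(n+1) ≤ ∏ |z - a_i| = ∏ |ζ - a_i| ≤ Δ_ζ^(n+1)`.
-/

open Polynomial

open Set intervalIntegral

namespace Polynomial

theorem derivative_surjective {K : Type*} [Field K] [CharZero K] :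
    Function.Surjective (derivative : K[X] → K[X]) := by
  intro p
  refine ⟨∑ k ∈ Finset.range (p.natDegree + 1), C (p.coeff k / (k + 1)) * X ^ (k + 1), ?_⟩
  rw [derivative_sum]
  conv_rhs => rw [p.as_sum_range_C_mul_X_pow]
  refine Finset.sum_congr rfl fun k _ => ?_
  rw [derivative_C_mul_X_pow]
  push_cast
  rw [div_mul_cancel₀ _ (Nat.cast_add_one_ne_zero k)]

theorem monic_and_natDegree_of_derivative_eq {K : Type*} [Field K] [CharZero K] {p q : K[X]}
    (hq : q.Monic) (h : derivative p = C ((q.natDegree : K) + 1) * q) :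
    p.Monic ∧ p.natDegree = q.natDegree + 1 := by
  have hc : (q.natDegree : K) + 1 ≠ 0 := Nat.cast_add_one_ne_zero _
  have hp : p.natDegree ≠ 0 := by
    rw [← derivative_ne_zero, h]
    exact mul_ne_zero (C_ne_zero.2 hc) hq.ne_zero
  have hnat : p.natDegree = q.natDegree + 1 := by
    have := natDegree_derivative p
    rw [h, natDegree_C_mul hc] at this
    omega
  refine ⟨?_, hnat⟩
  have hlc := congrArg leadingCoeff h
  rw [leadingCoeff_derivative, leadingCoeff_mul, leadingCoeff_C, hq.leadingCoeff, hnat,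
    mul_one] at hlc
  push_cast at hlc
  exact mul_eq_right₀ hc |>.1 hlc

theorem eval_mul_eval_nonneg_of_forall_not_isRoot {G : ℝ[X]} {s : Set ℝ} (hs : IsPreconnected s)
    (hG : ∀ t ∈ s, ¬ G.IsRoot t) {x y : ℝ} (hx : x ∈ s) (hy : y ∈ s) :
    0 ≤ G.eval x * G.eval y := by
  by_contra! hneg
  have hcont : ContinuousOn (fun t => G.eval t) s := G.continuousOn
  obtain ⟨t, ht, hzero⟩ : (0 : ℝ) ∈ (fun t => G.eval t) '' s := by
    rcases mul_neg_iff.1 hneg with ⟨hx0, hy0⟩ | ⟨hx0, hy0⟩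
    · exact hs.intermediate_value hy hx hcont ⟨hy0.le, hx0.le⟩
    · exact hs.intermediate_value hx hy hcont ⟨hx0.le, hy0.le⟩
  exact hG t ht hzero

theorem eval_mul_eval_nonneg_of_even_rootMultiplicity {s : Set ℝ} (hs : IsPreconnected s)
    {G : ℝ[X]} (hG : ∀ t ∈ s, Even (G.rootMultiplicity t)) {x y : ℝ} (hx : x ∈ s) (hy : y ∈ s) :
    0 ≤ G.eval x * G.eval y := by
  induction hN : G.natDegree using Nat.strong_induction_on generalizing G with
  | _ N ih =>
  obtain ⟨t, ht, hroot⟩ | hnoroot := em (∃ t ∈ s, G.IsRoot t)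
  swap
  · push Not at hnoroot
    exact eval_mul_eval_nonneg_of_forall_not_isRoot hs hnoroot hx hy
  obtain rfl | hG0 := eq_or_ne G 0
  · simp
  set d := G.rootMultiplicity t
  set H := G /ₘ (X - C t) ^ d
  have hfac : (X - C t) ^ d * H = G := pow_mul_divByMonic_rootMultiplicity_eq G t
  have hd : Even d := hG t ht
  have hdeg : H.natDegree < N := by
    have hH0 : H ≠ 0 := by
      rintro h
      rw [h, mul_zero] at hfac
      exact hG0 hfac.symm
    have := natDegree_mul (pow_ne_zero d (X_sub_C_ne_zero t)) hH0
    rw [hfac, natDegree_pow, natDegree_X_sub_C, mul_one] at this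
    have := (rootMultiplicity_pos hG0).2 hroot
    omega
  have hH : ∀ u ∈ s, Even (H.rootMultiplicity u) := by
    intro u hu
    have hmul := rootMultiplicity_mul (x := u) (hfac.symm ▸ hG0)
    rw [hfac, ← count_roots ((X - C t) ^ d), roots_pow, roots_X_sub_C, Multiset.count_nsmul] at hmul
    have := hG u hu
    rw [hmul, Nat.even_add] at this
    exact this.1 (hd.mul_right _)
  calc 0 ≤ ((x - t) ^ d * (y - t) ^ d) * (H.eval x * H.eval y) :=
        mul_nonneg (mul_nonneg (hd.pow_nonneg _) (hd.pow_nonneg _)) (ih _ hdeg hH rfl)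
    _ = G.eval x * G.eval y := by
        rw [← hfac]
        simp only [eval_mul, eval_pow, eval_sub, eval_X, eval_C]
        ring

variable {a b : ℝ}

theorem integral_eval_derivative (p : ℝ[X]) :
    ∫ x in a..b, p.derivative.eval x = p.eval b - p.eval a :=
  integral_eq_sub_of_hasDerivAt (fun x _ => p.hasDerivAt x)
    (p.derivative.continuous.intervalIntegrable a b)

theorem integral_eval_mul_pow_eq_zero_of_derivative_eq {Φ q : ℝ[X]} {c : ℝ} {k : ℕ}
    (hΦ : derivative Φ = C c * q) (ha : Φ.IsRoot a) (hb : Φ.IsRoot b)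
    (hq : ∫ x in a..b, q.eval x * x ^ (k + 1) = 0) :
    ∫ x in a..b, Φ.eval x * x ^ k = 0 := by
  have hparts := integral_eval_derivative (a := a) (b := b) (Φ * X ^ (k + 1))
  simp only [derivative_mul, hΦ, derivative_X_pow, eval_add, eval_mul, eval_C, eval_pow, eval_X,
    ha.eq_zero, hb.eq_zero, zero_mul, sub_zero] at hparts
  rw [integral_add ((by fun_prop : Continuous _).intervalIntegrable a b)
    ((by fun_prop : Continuous _).intervalIntegrable a b)] at hparts
  have hfirst : ∫ x in a..b, c * q.eval x * x ^ (k + 1) =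
      c * ∫ x in a..b, q.eval x * x ^ (k + 1) := by
    simp_rw [mul_assoc]
    exact integral_const_mul _ _
  have hsecond : ∫ x in a..b, Φ.eval x * (↑(k + 1) * x ^ (k + 1 - 1)) =
      (k + 1) * ∫ x in a..b, Φ.eval x * x ^ k := by
    rw [← integral_const_mul]
    congr 1 with x
    push_cast
    ring
  rw [hfirst, hsecond, hq, mul_zero, zero_add] at hparts
  exact (mul_eq_zero.1 hparts).resolve_left (by positivity)

theorem integral_eval_mul_eval_eq_zero_of_orthogonal_pow {F : ℝ[X]} {m : ℕ}
    (horth : ∀ k < m, ∫ x in a..b, F.eval x * x ^ k = 0) {S : ℝ[X]} (hS : S.natDegree < m) :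
    ∫ x in a..b, F.eval x * S.eval x = 0 := by
  simp_rw [eval_eq_sum_range (p := S), Finset.mul_sum]
  rw [integral_finsetSum fun k _ => (by fun_prop : Continuous _).intervalIntegrable a b]
  refine Finset.sum_eq_zero fun k hk => ?_
  rw [Finset.mem_range] at hk
  simp_rw [mul_left_comm _ (S.coeff k)]
  rw [integral_const_mul, horth k (by omega), mul_zero]

theorem le_card_roots_Ioo_of_orthogonal {F : ℝ[X]} {m : ℕ} (hab : a < b) (hF : F ≠ 0)
    (horth : ∀ S : ℝ[X], S.natDegree < m → ∫ x in a..b, F.eval x * S.eval x = 0) :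
    m ≤ {t ∈ F.roots.toFinset | t ∈ Ioo a b}.card := by
  classical
  -- Otherwise `F` times the product over its sign changes `T` in `(a, b)` has constant sign
  -- there, so it cannot be orthogonal to `1`.
  set T := {t ∈ F.roots.toFinset | t ∈ Ioo a b ∧ Odd (F.rootMultiplicity t)}
  suffices m ≤ T.card from this.trans <| Finset.card_le_card fun t ht => by
    rw [Finset.mem_filter] at ht ⊢
    exact ⟨ht.1, ht.2.1⟩
  by_contra! hT
  set S := ∏ t ∈ T, (X - C t)
  have hS0 : S ≠ 0 := Finset.prod_ne_zero_iff.2 fun t _ => X_sub_C_ne_zero t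
  have hSmult (u : ℝ) : S.rootMultiplicity u = if u ∈ T then 1 else 0 := by
    rw [← count_roots, roots_prod_X_sub_C, Multiset.count_eq_of_nodup T.nodup]
    simp
  have heven : ∀ u ∈ Ioo a b, Even ((F * S).rootMultiplicity u) := by
    intro u hu
    rw [rootMultiplicity_mul (mul_ne_zero hF hS0), hSmult]
    by_cases huT : u ∈ T
    · rw [if_pos huT]
      exact (Finset.mem_filter.1 huT).2.2.add_one
    · rw [if_neg huT, add_zero, ← Nat.not_odd_iff_even]
      intro hodd
      refine huT (Finset.mem_filter.2 ⟨?_, hu, hodd⟩)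
      rw [Multiset.mem_toFinset, mem_roots hF, ← rootMultiplicity_pos hF]
      exact hodd.pos
  obtain ⟨x₀, hx₀, hne⟩ : ∃ x₀ ∈ Ioo a b, (F * S).eval x₀ ≠ 0 := by
    by_contra! h
    exact mul_ne_zero hF hS0 <| eq_zero_of_infinite_isRoot _ <|
      (Ioo_infinite hab).mono fun x hx => h x hx
  set c := (F * S).eval x₀
  have hcont : Continuous fun x => c * (F * S).eval x := by fun_prop
  have hnonneg : Icc a b ⊆ {x | 0 ≤ c * (F * S).eval x} := by
    rw [← closure_Ioo hab.ne]
    exact closure_minimal (fun x hx => eval_mul_eval_nonneg_of_even_rootMultiplicity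
      isPreconnected_Ioo heven hx₀ hx) (isClosed_le continuous_const hcont)
  have hpos : 0 < ∫ x in a..b, c * (F * S).eval x :=
    integral_pos hab hcont.continuousOn (fun x hx => hnonneg (Ioc_subset_Icc_self hx))
      ⟨x₀, Ioo_subset_Icc_self hx₀, mul_self_pos.2 hne⟩
  have hSdeg : S.natDegree < m := by
    rwa [natDegree_finsetProd_X_sub_C_eq_card]
  simp_rw [eval_mul] at hpos
  rw [integral_const_mul, horth S hSdeg, mul_zero] at hpos
  exact hpos.false

theorem card_roots_eq_natDegree_and_mem_Icc_of_orthogonal {F : ℝ[X]} {m : ℕ} (hab : a < b)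
    (hdeg : F.natDegree = m + 2) (ha : F.IsRoot a) (hb : F.IsRoot b)
    (horth : ∀ S : ℝ[X], S.natDegree < m → ∫ x in a..b, F.eval x * S.eval x = 0) :
    F.roots.card = F.natDegree ∧ ∀ y ∈ F.roots, y ∈ Icc a b := by
  have hF : F ≠ 0 := by rintro rfl; simp at hdeg
  set R := {t ∈ F.roots.toFinset | t ∈ Ioo a b}
  have hR : m ≤ R.card := le_card_roots_Ioo_of_orthogonal hab hF horth
  have haR : a ∉ insert b R := by simp [R, hab.ne]
  have hbR : b ∉ R := by simp [R]
  have hsub : insert a (insert b R) ⊆ F.roots.toFinset := by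
    intro t ht
    simp only [R, Finset.mem_insert, Finset.mem_filter] at ht
    rcases ht with rfl | rfl | ⟨ht, -⟩
    · exact Multiset.mem_toFinset.2 ((mem_roots hF).2 ha)
    · exact Multiset.mem_toFinset.2 ((mem_roots hF).2 hb)
    · exact ht
  have hcard : (insert a (insert b R)).card = R.card + 2 := by
    rw [Finset.card_insert_of_notMem haR, Finset.card_insert_of_notMem hbR]
  -- `a`, `b` and the at least `m` roots in `(a, b)` already exhaust the degree `m + 2`
  have hsubcard := Finset.card_le_card hsub
  have hdistinct := Multiset.toFinset_card_le F.roots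
  have hroots := card_roots' F
  have heq := Finset.eq_of_subset_of_card_le hsub (by omega)
  refine ⟨by omega, fun y hy => ?_⟩
  rw [← Multiset.mem_toFinset, ← heq] at hy
  simp only [R, Finset.mem_insert, Finset.mem_filter] at hy
  rcases hy with rfl | rfl | ⟨-, hy⟩
  · exact left_mem_Icc.2 hab.le
  · exact right_mem_Icc.2 hab.le
  · exact Ioo_subset_Icc_self hy

theorem norm_le_add_of_eval_eq {K : Type*} [NormedField K] {p : K[X]} (hsplit : p.Splits)
    (hm : p.Monic) (hdeg : p.natDegree ≠ 0) {ζ z : K} {r Δ : ℝ}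
    (hr : ∀ a ∈ p.roots, ‖a‖ ≤ r) (hΔ : ∀ a ∈ p.roots, ‖ζ - a‖ ≤ Δ)
    (h : p.eval z = p.eval ζ) : ‖z‖ ≤ Δ + r := by
  have hnorm (w : K) : ‖p.eval w‖ = (p.roots.map fun a => ‖w - a‖).prod := by
    rw [hsplit.eval_eq_prod_roots_of_monic hm, ← normHom_apply, map_multiset_prod,
      Multiset.map_map]
    rfl
  have hcard : p.roots.card = p.natDegree := splits_iff_card_roots.1 hsplit
  obtain ⟨a, ha⟩ := Multiset.card_pos_iff_exists_mem.1 (hcard ▸ Nat.pos_of_ne_zero hdeg)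
  have hΔ0 : 0 ≤ Δ := (norm_nonneg _).trans (hΔ a ha)
  by_contra! hlt
  have hconst (c : ℝ) : (p.roots.map fun _ => c).prod = c ^ p.natDegree := by
    rw [Multiset.map_const', Multiset.prod_replicate, hcard]
  have hlower : (‖z‖ - r) ^ p.natDegree ≤ ‖p.eval z‖ := by
    rw [hnorm, ← hconst]
    exact Multiset.prod_map_le_prod_map₀ _ _ (fun _ _ => by linarith)
      fun a ha => (sub_le_sub_left (hr a ha) _).trans (norm_sub_norm_le z a)
  have hupper : ‖p.eval ζ‖ ≤ Δ ^ p.natDegree := by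
    rw [hnorm, ← hconst]
    exact Multiset.prod_map_le_prod_map₀ _ _ (fun _ _ => norm_nonneg _) hΔ
  have := pow_lt_pow_left₀ (by linarith : Δ < ‖z‖ - r) hΔ0 hdeg
  rw [h] at hlower
  linarith

theorem eval_eq_eval_of_derivative_eq {K : Type*} [Field K] [CharZero K] {P Φ : K[X]} {ζ z : K}
    (h : ∀ w, Φ.derivative.eval w = P.eval w + (w - ζ) * P.derivative.eval w)
    (hz : P.eval z = 0) : Φ.eval z = Φ.eval ζ := by
  set D := (X - C ζ) * P - Φ
  have hD : derivative D = 0 := Polynomial.funext fun w => by simp [D, h]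
  have hDz : D.eval z = D.eval ζ := by
    rw [eq_C_of_derivative_eq_zero hD, eval_C, eval_C]
  simpa [D, hz] using hDz

end Polynomial

theorem Complex.norm_sub_ofReal_le_iSup_Icc (ζ : ℂ) {a b y : ℝ} (hy : y ∈ Icc a b) :
    ‖ζ - y‖ ≤ ⨆ x : Icc a b, ‖ζ - (x : ℝ)‖ :=
  le_ciSup (f := fun x : Icc a b => ‖ζ - (x : ℝ)‖) (isCompact_range (by fun_prop)).bddAbove ⟨y, hy⟩

theorem IsMonicLegendre.card_roots_eq_natDegree_and_mem_Icc_of_derivative_eq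
    {L : ℕ → ℝ[X]} (hL : IsMonicLegendre L) {n : ℕ} (hn : 1 ≤ n) {Φ : ℝ[X]}
    (hΦ' : derivative Φ = C ((n : ℝ) + 1) * L n) (hΦ : Φ.IsRoot (-1)) :
    Φ.roots.card = Φ.natDegree ∧ ∀ y ∈ Φ.roots, y ∈ Icc (-1) 1 := by
  obtain ⟨hmon, hdeg, horth⟩ := hL n
  have hnat : Φ.natDegree = n + 1 := by
    simpa [hdeg] using (monic_and_natDegree_of_derivative_eq hmon (by rwa [hdeg])).2
  have h1 : Φ.IsRoot 1 := by
    have := integral_eval_derivative (a := -1) (b := 1) Φ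
    simp_rw [hΦ', eval_mul, eval_C] at this
    rw [integral_const_mul] at this
    have h0 := horth 0 hn
    simp only [pow_zero, mul_one] at h0
    rw [h0, mul_zero, hΦ.eq_zero, sub_zero] at this
    exact this.symm
  refine card_roots_eq_natDegree_and_mem_Icc_of_orthogonal (m := n - 1) (by norm_num) (by omega)
    hΦ h1 fun S hS => integral_eval_mul_eval_eq_zero_of_orthogonal_pow (fun k hk =>
      integral_eval_mul_pow_eq_zero_of_derivative_eq hΦ' hΦ h1 (horth (k + 1) (by omega))) hS

/-- All zeros of `P_n` (for `n ≥ 1`) satisfy `|z| ≤ Δ_ζ + 1`,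
where `Δ_ζ = sup_{x ∈ [-1,1]} |ζ - x|`. -/
theorem polar_legendre_zeros_bounded
    (L : ℕ → Polynomial ℝ) (ζ : ℂ) (P : ℕ → Polynomial ℂ)
    (hL : IsMonicLegendre L) (hP : IsPolarLegendre L ζ P)
    (n : ℕ) (hn : 1 ≤ n) (z : ℂ) (hz : (P n).eval z = 0) :
    ‖z‖ ≤ (⨆ x : Set.Icc (-1:ℝ) 1, ‖ζ - (x : ℝ)‖) + 1 := by
  obtain ⟨Φ₀, hΦ₀⟩ := derivative_surjective (C ((n : ℝ) + 1) * L n)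
  set Φ := Φ₀ - C (Φ₀.eval (-1))
  have hΦ' : derivative Φ = C ((n : ℝ) + 1) * L n := by simp [Φ, hΦ₀]
  have hΦ : Φ.IsRoot (-1) := by simp [Φ]
  obtain ⟨hmonic, hdeg⟩ := monic_and_natDegree_of_derivative_eq (hL n).1 (by rwa [(hL n).2.1])
  obtain ⟨hcard, hIcc⟩ := hL.card_roots_eq_natDegree_and_mem_Icc_of_derivative_eq hn hΦ' hΦ
  set Φc := Φ.map (algebraMap ℝ ℂ)
  have hroots : ∀ a ∈ Φc.roots, ‖a‖ ≤ 1 ∧ ‖ζ - a‖ ≤ ⨆ x : Icc (-1 : ℝ) 1, ‖ζ - (x : ℝ)‖ := by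
    rw [← hmonic.roots_map_of_card_eq_natDegree _ hcard, Multiset.forall_mem_map_iff]
    exact fun y hy =>
      ⟨by simpa [abs_le] using hIcc y hy, Complex.norm_sub_ofReal_le_iSup_Icc ζ (hIcc y hy)⟩
  have heval : Φc.eval z = Φc.eval ζ := by
    refine eval_eq_eval_of_derivative_eq (fun w => ?_) hz
    rw [← (hP n).2.2 w, derivative_map, hΦ']
    simp
  exact norm_le_add_of_eval_eq (splits_iff_card_roots.2 IsAlgClosed.card_roots_eq_natDegree)
    (hmonic.map _) (by simp [hdeg]) (fun a ha => (hroots a ha).1)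
    (fun a ha => (hroots a ha).2) heval
end

section
/- Let ζ ∈ ℂ and Δ_ζ = sup_{x ∈ [-1,1]} |ζ - x|. Then n·P_n(z)/L_n′(z) → (z²-1)/(z-ζ) as n → ∞, uniformly on every compact subset of {z ∈ ℂ : |z| > Δ_ζ + 1} (on which L_n′ and z-ζ do not vanish). -/
open Polynomial

/-!
Orthogonality makes `L_n` an eigenfunction of the Legendre operator,
`((x² - 1) L_n')' = n (n + 1) L_n`. Together with the relation defining `P_n` this says that
`n (z - ζ) P_n(z) - (z² - 1) L_n'(z)` has zero derivative, so it equals its value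
`-(ζ² - 1) L_n'(ζ)` at `z = ζ`, and the error `n P_n / L_n' - (z² - 1)/(z - ζ)` is
`-(ζ² - 1) L_n'(ζ) / (L_n'(z) (z - ζ))`. Orthogonality also puts every zero of `L_n` in `(-1, 1)`,
hence by Gauss–Lucas every zero of `L_n'` in `[-1, 1]`; comparing the factorisations of `L_n'` at
`ζ` and at `z` bounds the error by a constant times `(Δ_ζ / (|z| - 1)) ^ (n - 1)`.
-/

open Set Filter Topology

noncomputable def legendreOp {R : Type*} [CommRing R] (p : R[X]) : R[X] :=
  derivative ((X ^ 2 - 1) * derivative p)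

def OrthogonalToDegreeLT (p : ℝ[X]) (n : ℕ) : Prop :=
  ∀ k < n, ∫ x in (-1:ℝ)..1, p.eval x * x ^ k = 0

section LegendreOp

variable {R : Type*} [CommRing R]

theorem coeff_legendreOp (p : R[X]) (k : ℕ) :
    (legendreOp p).coeff k =
      (k * (k + 1) : R) * p.coeff k - ((k + 1) * (k + 2) : R) * p.coeff (k + 2) := by
  have hX_sq_mul : ((X ^ 2 : R[X]) * derivative p).coeff (k + 1) = k * p.coeff k := by
    rcases k with _ | k
    · simp [coeff_X_pow_mul']
    · rw [show k + 1 + 1 = k + 2 by ring, coeff_X_pow_mul, coeff_derivative]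
      push_cast
      ring
  rw [legendreOp, coeff_derivative, sub_mul, one_mul, coeff_sub, hX_sq_mul, coeff_derivative]
  push_cast
  ring

theorem natDegree_legendreOp_le (p : R[X]) : (legendreOp p).natDegree ≤ p.natDegree := by
  refine natDegree_le_iff_coeff_eq_zero.mpr fun k hk => ?_
  rw [coeff_legendreOp, coeff_eq_zero_of_natDegree_lt hk,
    coeff_eq_zero_of_natDegree_lt (hk.trans (by omega)), mul_zero, mul_zero, sub_zero]

theorem map_legendreOp {S : Type*} [CommRing S] (f : R →+* S) (p : R[X]) :
    (legendreOp p).map f = legendreOp (p.map f) := by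
  simp [legendreOp, derivative_map]

end LegendreOp

section Orthogonality

open intervalIntegral

theorem integral_legendreOp_mul (u v : ℝ[X]) :
    ∫ x in (-1:ℝ)..1, (legendreOp u).eval x * v.eval x =
      -∫ x in (-1:ℝ)..1, (x ^ 2 - 1) * ((derivative u).eval x * (derivative v).eval x) := by
  set A : ℝ[X] := (X ^ 2 - 1) * derivative u with hA
  have hboundary : ∀ x : ℝ, x ^ 2 = 1 → A.eval x = 0 := fun x hx => by simp [A, hx]
  have hA_eval : ∀ x : ℝ, A.eval x * (derivative v).eval x =
      (x ^ 2 - 1) * ((derivative u).eval x * (derivative v).eval x) := fun x => by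
    simp [A, mul_assoc]
  have hibp := integral_mul_deriv_eq_deriv_mul (a := -1) (b := 1)
    (fun x _ => A.hasDerivAt x) (fun x _ => v.hasDerivAt x)
    ((derivative A).continuous.intervalIntegrable _ _)
    ((derivative v).continuous.intervalIntegrable _ _)
  rw [hboundary 1 (by norm_num), hboundary (-1) (by norm_num)] at hibp
  simp only [hA_eval, zero_mul, sub_zero, zero_sub] at hibp
  rw [legendreOp, ← hA, hibp, neg_neg]

theorem integral_legendreOp_mul_comm (u v : ℝ[X]) :
    ∫ x in (-1:ℝ)..1, (legendreOp u).eval x * v.eval x =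
      ∫ x in (-1:ℝ)..1, u.eval x * (legendreOp v).eval x := by
  simp_rw [integral_legendreOp_mul, mul_comm (u.eval _), integral_legendreOp_mul, mul_comm]

theorem OrthogonalToDegreeLT.integral_mul_eval_eq_zero {𝕜 : Type*} [RCLike 𝕜] {p : ℝ[X]}
    {n : ℕ} (horth : OrthogonalToDegreeLT p n) {q : 𝕜[X]} (hq : q.natDegree < n) :
    ∫ x in (-1:ℝ)..1, ((p.eval x : ℝ) : 𝕜) * q.eval (x : 𝕜) = 0 := by
  simp_rw [eval_eq_sum_range' hq, Finset.mul_sum]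
  rw [integral_finsetSum fun k _ => by apply Continuous.intervalIntegrable; fun_prop]
  refine Finset.sum_eq_zero fun k hk => ?_
  simp_rw [mul_left_comm _ (q.coeff k), ← RCLike.ofReal_pow, ← RCLike.ofReal_mul]
  rw [integral_const_mul, RCLike.intervalIntegral_ofReal, horth k (Finset.mem_range.mp hk),
    RCLike.ofReal_zero, mul_zero]

theorem OrthogonalToDegreeLT.eq_zero {p : ℝ[X]} {n : ℕ} (horth : OrthogonalToDegreeLT p n)
    (hp : p.degree < n) : p = 0 := by
  by_contra hp0
  have hself : ∫ x in (-1:ℝ)..1, p.eval x * p.eval x = 0 := by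
    simpa using horth.integral_mul_eval_eq_zero (𝕜 := ℝ) ((natDegree_lt_iff_degree_lt hp0).mpr hp)
  obtain ⟨c, hc, hpc⟩ : ∃ c ∈ Icc (-1:ℝ) 1, p.eval c ≠ 0 := by
    by_contra! h
    exact hp0 (p.eq_zero_of_infinite_isRoot ((Icc_infinite (by norm_num)).mono h))
  have hpos := integral_pos (by norm_num) (by fun_prop) (fun x _ => mul_self_nonneg (p.eval x))
    ⟨c, hc, mul_self_pos.mpr hpc⟩
  exact hpos.ne' hself

theorem OrthogonalToDegreeLT.legendreOp_eq {p : ℝ[X]} {n : ℕ} (horth : OrthogonalToDegreeLT p n)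
    (hp : p.natDegree ≤ n) : legendreOp p = C ((n : ℝ) * (n + 1)) * p := by
  rw [← sub_eq_zero]
  refine OrthogonalToDegreeLT.eq_zero (n := n) (fun k hk => ?_) ?_
  · have hXk : (legendreOp (X ^ k : ℝ[X])).natDegree < n :=
      (natDegree_legendreOp_le _).trans_lt (by simpa using hk)
    have hLp : ∫ x in (-1:ℝ)..1, (legendreOp p).eval x * x ^ k = 0 := by
      have hsymm := integral_legendreOp_mul_comm p (X ^ k)
      simp only [eval_pow, eval_X] at hsymm
      simpa [hsymm] using horth.integral_mul_eval_eq_zero (𝕜 := ℝ) hXk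
    simp only [eval_sub, eval_mul, eval_C, sub_mul]
    rw [integral_sub (by apply Continuous.intervalIntegrable; fun_prop)
      (by apply Continuous.intervalIntegrable; fun_prop), hLp]
    simp only [mul_assoc, integral_const_mul, horth k hk, mul_zero, sub_zero]
  · refine degree_lt_iff_coeff_zero _ _ |>.mpr fun k hk => ?_
    rw [coeff_sub, coeff_C_mul, coeff_legendreOp,
      coeff_eq_zero_of_natDegree_lt (by omega : p.natDegree < k + 2)]
    rcases hk.eq_or_lt with rfl | hk
    · ring
    · rw [coeff_eq_zero_of_natDegree_lt (by omega : p.natDegree < k)]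
      ring

end Orthogonality

section Zeros

open intervalIntegral

theorem exists_mem_Ioo_eval_ofReal_ne_zero {q : ℂ[X]} (hq : q ≠ 0) {a b : ℝ} (hab : a < b) :
    ∃ c ∈ Ioo a b, q.eval (c : ℂ) ≠ 0 := by
  by_contra! h
  refine hq (q.eq_zero_of_infinite_isRoot
    (((Ioo_infinite hab).image Complex.ofReal_injective.injOn).mono ?_))
  rintro _ ⟨c, hc, rfl⟩
  exact h c hc

theorem integral_mul_norm_eval_sq_pos {f : ℝ → ℝ} {a b : ℝ} (hab : a < b) (hf : Continuous f)
    (hf_nonneg : ∀ x ∈ Ioc a b, 0 ≤ f x) (hf_pos : ∀ x ∈ Ioo a b, 0 < f x) {q : ℂ[X]}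
    (hq : q ≠ 0) : 0 < ∫ x in a..b, f x * ‖q.eval (x : ℂ)‖ ^ 2 := by
  obtain ⟨c, hc, hqc⟩ := exists_mem_Ioo_eval_ofReal_ne_zero hq hab
  exact integral_pos hab (by fun_prop) (fun x hx => mul_nonneg (hf_nonneg x hx) (sq_nonneg _))
    ⟨c, Ioo_subset_Icc_self hc, mul_pos (hf_pos c hc) (by positivity)⟩

theorem exists_mem_Ioo_ofReal_eq_of_integral_eq_zero {a b : ℝ} (hab : a < b) {q : ℂ[X]}
    (hq : q ≠ 0) {w : ℂ} (hw : ∫ x in a..b, ((x : ℂ) - w) * (‖q.eval (x : ℂ)‖ ^ 2 : ℝ) = 0) :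
    ∃ r ∈ Ioo a b, (r : ℂ) = w := by
  set g : ℝ → ℝ := fun x => ‖q.eval (x : ℂ)‖ ^ 2
  have hg_int : ∀ f : ℝ → ℝ, Continuous f →
      IntervalIntegrable (fun x => f x * g x) MeasureTheory.volume a b :=
    fun f hf => by apply Continuous.intervalIntegrable; fun_prop
  have hmass : 0 < ∫ x in a..b, g x := by
    simpa using integral_mul_norm_eval_sq_pos (f := fun _ => 1) hab continuous_const
      (fun _ _ => zero_le_one) (fun _ _ => one_pos) hq
  -- `w` is the barycentre of the weight `g` on `[a, b]`.
  set r := (∫ x in a..b, x * g x) / ∫ x in a..b, g x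
  have hwr : w = r := by
    rw [integral_congr (g := fun x => ((x * g x : ℝ) : ℂ) - w * (g x : ℂ))
        (fun x _ => by simp only [g]; push_cast; ring),
      integral_sub (by apply Continuous.intervalIntegrable; fun_prop)
        (by apply Continuous.intervalIntegrable; fun_prop),
      integral_const_mul, integral_ofReal, integral_ofReal, sub_eq_zero] at hw
    rw [Complex.ofReal_div, hw, mul_div_cancel_right₀ _ (by exact_mod_cast hmass.ne')]
  have hr : ∫ x in a..b, (x - r) * g x = 0 := by
    simp_rw [sub_mul]
    rw [integral_sub (hg_int (fun x => x) continuous_id) (hg_int _ continuous_const),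
      integral_const_mul, div_mul_cancel₀ _ hmass.ne', sub_self]
  refine ⟨r, ⟨?_, ?_⟩, hwr.symm⟩
  · by_contra! h
    have := integral_mul_norm_eval_sq_pos (f := fun x => x - r) hab (by fun_prop)
      (fun x hx => by linarith [hx.1]) (fun x hx => by linarith [hx.1]) hq
    exact (hr ▸ this).false
  · by_contra! h
    have := integral_mul_norm_eval_sq_pos (f := fun x => r - x) hab (by fun_prop)
      (fun x hx => by linarith [hx.2]) (fun x hx => by linarith [hx.2]) hq
    rw [integral_congr (g := fun x => -((x - r) * g x)) (fun x _ => by simp only [g]; ring),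
      integral_neg, hr, neg_zero] at this
    exact this.false

theorem OrthogonalToDegreeLT.exists_mem_Ioo_ofReal_eq_of_isRoot {p : ℝ[X]} {n : ℕ}
    (horth : OrthogonalToDegreeLT p n) (hp0 : p ≠ 0) (hp : p.natDegree ≤ n) {w : ℂ}
    (hw : (p.map (algebraMap ℝ ℂ)).IsRoot w) : ∃ r ∈ Ioo (-1:ℝ) 1, (r : ℂ) = w := by
  set q := p.map (algebraMap ℝ ℂ) /ₘ (X - C w)
  have hpq : (X - C w) * q = p.map (algebraMap ℝ ℂ) := mul_divByMonic_eq_iff_isRoot.mpr hw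
  have hq0 : q ≠ 0 := by
    rintro hq
    rw [hq, mul_zero, eq_comm, Polynomial.map_eq_zero_iff (algebraMap ℝ ℂ).injective] at hpq
    exact hp0 hpq
  have hqdeg : q.natDegree < n := by
    have := congrArg natDegree hpq
    rw [natDegree_mul (X_sub_C_ne_zero w) hq0, natDegree_X_sub_C, natDegree_map] at this
    omega
  refine exists_mem_Ioo_ofReal_eq_of_integral_eq_zero (by norm_num) hq0 ?_
  -- `p` is orthogonal to the conjugate of `q`, and `p · conj q = (x - w) |q|²` on the real line.
  rw [← horth.integral_mul_eval_eq_zero (q := q.map (starRingEnd ℂ)) (by rwa [natDegree_map])]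
  refine integral_congr fun x _ => ?_
  have hconj : (q.map (starRingEnd ℂ)).eval (x : ℂ) = starRingEnd ℂ (q.eval (x : ℂ)) := by
    rw [eval_map, ← eval₂_at_apply, Complex.conj_ofReal]
  have hp_eval : ((p.eval x : ℝ) : ℂ) = ((x : ℂ) - w) * q.eval (x : ℂ) := by
    rw [← Complex.coe_algebraMap, ← eval₂_at_apply, ← eval_map, ← hpq]
    simp
  simp only [RCLike.ofReal_eq_complex_ofReal]
  rw [hconj, hp_eval, mul_assoc, Complex.mul_conj']
  push_cast
  rfl

end Zeros

theorem OrthogonalToDegreeLT.exists_mem_Icc_ofReal_eq_of_isRoot_derivative {p : ℝ[X]} {n : ℕ}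
    (horth : OrthogonalToDegreeLT p n) (hp0 : 0 < p.natDegree) (hp : p.natDegree ≤ n) {w : ℂ}
    (hw : (derivative (p.map (algebraMap ℝ ℂ))).IsRoot w) : ∃ x ∈ Icc (-1:ℝ) 1, (x : ℂ) = w := by
  have hdeg : 0 < (p.map (algebraMap ℝ ℂ)).degree := by
    rwa [degree_map, ← natDegree_pos_iff_degree_pos]
  have hderiv : derivative (p.map (algebraMap ℝ ℂ)) ≠ 0 := by
    rw [Ne, derivative_eq_zero, natDegree_map]
    exact hp0.ne'
  have hconvex : Convex ℝ ((↑) '' Icc (-1:ℝ) 1 : Set ℂ) :=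
    (convex_Icc (-1:ℝ) 1).linear_image Complex.ofRealCLM.toLinearMap
  have hroots : (p.map (algebraMap ℝ ℂ)).rootSet ℂ ⊆ (↑) '' Icc (-1:ℝ) 1 := by
    intro z hz
    rw [mem_rootSet, coe_aeval_eq_eval] at hz
    obtain ⟨x, hx, rfl⟩ :=
      horth.exists_mem_Ioo_ofReal_eq_of_isRoot (ne_zero_of_natDegree_gt hp0) hp hz.2
    exact ⟨x, Ioo_subset_Icc_self hx, rfl⟩
  exact convexHull_min hroots hconvex (rootSet_derivative_subset_convexHull_rootSet hdeg
    (mem_rootSet.mpr ⟨hderiv, by simpa using hw⟩))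

theorem norm_eval_le_pow_mul_norm_eval {K : Type*} [NormedField K] [IsAlgClosed K] (p : K[X])
    {a b : K} {ρ : ℝ} (h : ∀ w ∈ p.roots, ‖a - w‖ ≤ ρ * ‖b - w‖) :
    ‖p.eval a‖ ≤ ρ ^ p.natDegree * ‖p.eval b‖ := by
  have hsplit :=
    C_leadingCoeff_mul_prod_multiset_X_sub_C (IsAlgClosed.card_roots_eq_natDegree (p := p))
  have heval : ∀ c : K,
      ‖p.eval c‖ = ‖p.leadingCoeff‖ * (p.roots.map fun w => ‖c - w‖).prod := by
    intro c
    conv_lhs => rw [← hsplit]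
    rw [eval_mul, eval_C, eval_multiset_prod, norm_mul, Multiset.map_map]
    congr 1
    simpa [Multiset.map_map, Function.comp_def] using
      map_multiset_prod (normHom : K →*₀ ℝ) (p.roots.map fun w => c - w)
  rw [heval, heval, mul_left_comm]
  gcongr
  calc (p.roots.map fun w => ‖a - w‖).prod ≤ (p.roots.map fun w => ρ * ‖b - w‖).prod :=
        Multiset.prod_map_le_prod_map₀ _ _ (fun _ _ => norm_nonneg _) h
    _ = ρ ^ p.natDegree * (p.roots.map fun w => ‖b - w‖).prod := by
        rw [Multiset.prod_map_mul, Multiset.map_const', Multiset.prod_replicate,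
          IsAlgClosed.card_roots_eq_natDegree]

theorem mul_sub_mul_eval_eq_of_legendreOp_eq {K : Type*} [Field K] [CharZero K] {ℓ P : K[X]}
    {n : ℕ} {ζ : K} (hℓ : legendreOp ℓ = C ((n : K) * (n + 1)) * ℓ)
    (hP : P + (X - C ζ) * derivative P = C ((n : K) + 1) * ℓ) (z : K) :
    n * (z - ζ) * P.eval z =
      (z ^ 2 - 1) * (derivative ℓ).eval z - (ζ ^ 2 - 1) * (derivative ℓ).eval ζ := by
  set W : K[X] := C (n : K) * ((X - C ζ) * P) - (X ^ 2 - 1) * derivative ℓ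
  have hW : derivative W = 0 := by
    rw [derivative_sub, ← legendreOp, hℓ, derivative_C_mul, derivative_mul, derivative_sub,
      derivative_X, derivative_C, sub_zero, one_mul, hP, ← mul_assoc, ← C_mul, sub_self]
  have hWz : W.eval z = W.eval ζ := by
    rw [eq_C_of_derivative_eq_zero hW, eval_C, eval_C]
  simp only [W, eval_sub, eval_mul, eval_C, eval_pow, eval_X, eval_one, sub_self] at hWz
  linear_combination hWz

theorem norm_sub_ofReal_le_iSup {s : Set ℝ} (hs : IsCompact s) (ζ : ℂ) {x : ℝ} (hx : x ∈ s) :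
    ‖ζ - x‖ ≤ ⨆ y : s, ‖ζ - (y : ℝ)‖ := by
  have : CompactSpace s := isCompact_iff_compactSpace.mp hs
  exact le_ciSup (isCompact_range (continuous_const.sub
    (Complex.continuous_ofReal.comp continuous_subtype_val)).norm).bddAbove (⟨x, hx⟩ : s)

theorem norm_mul_eval_div_sub_le {ℓ P : ℂ[X]} {n : ℕ} {ζ z : ℂ} {Δ m : ℝ}
    (hℓ : legendreOp ℓ = C ((n : ℂ) * (n + 1)) * ℓ)
    (hP : P + (X - C ζ) * derivative P = C ((n : ℂ) + 1) * ℓ)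
    (hroots : ∀ w, (derivative ℓ).IsRoot w → ∃ x ∈ Icc (-1:ℝ) 1, (x : ℂ) = w)
    (hΔ : ∀ x ∈ Icc (-1:ℝ) 1, ‖ζ - x‖ ≤ Δ) (hm : Δ + 1 < m) (hz : m ≤ ‖z‖) :
    ‖n * P.eval z / (derivative ℓ).eval z - (z ^ 2 - 1) / (z - ζ)‖ ≤
      ‖ζ ^ 2 - 1‖ / (m - Δ) * (Δ / (m - 1)) ^ (derivative ℓ).natDegree := by
  have hζ : ‖ζ‖ ≤ Δ := by simpa using hΔ 0 (by norm_num)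
  have hΔ0 : 0 ≤ Δ := (norm_nonneg ζ).trans hζ
  have hunit : ∀ x ∈ Icc (-1:ℝ) 1, ‖(x : ℂ)‖ ≤ 1 := fun x hx => by simpa [abs_le] using hx
  have hfar : ∀ x ∈ Icc (-1:ℝ) 1, m - 1 ≤ ‖z - x‖ := fun x hx => by
    linarith [norm_sub_norm_le z (x : ℂ), hunit x hx]
  have hℓz : (derivative ℓ).eval z ≠ 0 := fun h => by
    obtain ⟨x, hx, rfl⟩ := hroots z h
    linarith [hunit x hx]
  have hzζ : m - Δ ≤ ‖z - ζ‖ := by linarith [norm_sub_norm_le z ζ]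
  have hratio : ‖(derivative ℓ).eval ζ‖ ≤
      (Δ / (m - 1)) ^ (derivative ℓ).natDegree * ‖(derivative ℓ).eval z‖ := by
    refine norm_eval_le_pow_mul_norm_eval _ fun w hw => ?_
    obtain ⟨x, hx, rfl⟩ := hroots w (isRoot_of_mem_roots hw)
    calc ‖ζ - x‖ ≤ Δ := hΔ x hx
      _ = Δ / (m - 1) * (m - 1) := (div_mul_cancel₀ _ (by linarith)).symm
      _ ≤ Δ / (m - 1) * ‖z - x‖ := by
        gcongr
        · exact div_nonneg hΔ0 (by linarith)
        · exact hfar x hx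
  have hsub : n * P.eval z / (derivative ℓ).eval z - (z ^ 2 - 1) / (z - ζ) =
      -((ζ ^ 2 - 1) * (derivative ℓ).eval ζ) / ((derivative ℓ).eval z * (z - ζ)) := by
    rw [div_sub_div _ _ hℓz (norm_pos_iff.mp (by linarith))]
    congr 1
    linear_combination mul_sub_mul_eval_eq_of_legendreOp_eq hℓ hP z
  have hℓz_pos : 0 < ‖(derivative ℓ).eval z‖ := norm_pos_iff.mpr hℓz
  rw [hsub, norm_div, norm_neg, norm_mul, norm_mul]
  calc ‖ζ ^ 2 - 1‖ * ‖(derivative ℓ).eval ζ‖ / (‖(derivative ℓ).eval z‖ * ‖z - ζ‖)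
      ≤ ‖ζ ^ 2 - 1‖ * ((Δ / (m - 1)) ^ (derivative ℓ).natDegree * ‖(derivative ℓ).eval z‖) /
          (‖(derivative ℓ).eval z‖ * (m - Δ)) :=
        div_le_div₀ (mul_nonneg (norm_nonneg _) ((norm_nonneg _).trans hratio))
          (mul_le_mul_of_nonneg_left hratio (norm_nonneg _)) (mul_pos hℓz_pos (by linarith))
          (mul_le_mul_of_nonneg_left hzζ hℓz_pos.le)
    _ = ‖ζ ^ 2 - 1‖ / (m - Δ) * (Δ / (m - 1)) ^ (derivative ℓ).natDegree := by
        field_simp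

/-- `n·P_n(z)/L_n′(z) → (z²-1)/(z-ζ)` uniformly on every compact subset of
`{z : |z| > Δ_ζ + 1}`. -/
theorem polar_legendre_relative_asymptotics_derivative
    (L : ℕ → Polynomial ℝ) (ζ : ℂ) (P : ℕ → Polynomial ℂ)
    (hL : IsMonicLegendre L) (hP : IsPolarLegendre L ζ P)
    (K : Set ℂ) (hK : IsCompact K)
    (hKsub : K ⊆ {z : ℂ | (⨆ x : Set.Icc (-1:ℝ) 1, ‖ζ - (x : ℝ)‖) + 1 <
        ‖z‖}) :
    TendstoUniformlyOn
      (fun (n : ℕ) (z : ℂ) =>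
        (n : ℂ) * (P n).eval z /
          (Polynomial.derivative ((L n).map (algebraMap ℝ ℂ))).eval z)
      (fun z => (z ^ 2 - 1) / (z - ζ)) Filter.atTop K := by
  set Δ := ⨆ x : Set.Icc (-1:ℝ) 1, ‖ζ - (x : ℝ)‖
  have hΔ : ∀ x ∈ Icc (-1:ℝ) 1, ‖ζ - x‖ ≤ Δ := fun x => norm_sub_ofReal_le_iSup isCompact_Icc ζ
  have hΔ0 : 0 ≤ Δ := (norm_nonneg _).trans (hΔ 0 (by norm_num))
  obtain ⟨m, hm, hmK⟩ := hK.exists_forall_le' continuous_norm.continuousOn hKsub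
  have hbound : Tendsto (fun n => ‖ζ ^ 2 - 1‖ / (m - Δ) * (Δ / (m - 1)) ^ (n - 1)) atTop (𝓝 0) := by
    simpa using ((tendsto_pow_atTop_nhds_zero_of_lt_one (div_nonneg hΔ0 (by linarith))
      ((div_lt_one (by linarith)).mpr (by linarith))).comp (tendsto_sub_atTop_nat 1)).const_mul
      (‖ζ ^ 2 - 1‖ / (m - Δ))
  refine Metric.tendstoUniformlyOn_iff.mpr fun ε hε => ?_
  filter_upwards [hbound.eventually (gt_mem_nhds hε), eventually_ge_atTop 1] with n hnε hn z hz
  obtain ⟨-, hdeg, horth⟩ := hL n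
  have hℓ : legendreOp ((L n).map (algebraMap ℝ ℂ)) =
      C ((n : ℂ) * (n + 1)) * (L n).map (algebraMap ℝ ℂ) := by
    rw [← map_legendreOp, OrthogonalToDegreeLT.legendreOp_eq horth hdeg.le, Polynomial.map_mul,
      map_C]
    simp
  have hpolar : P n + (X - C ζ) * derivative (P n) =
      C ((n : ℂ) + 1) * (L n).map (algebraMap ℝ ℂ) :=
    Polynomial.funext fun w => by simpa using ((hP n).2.2 w).symm
  have hestimate := norm_mul_eval_div_sub_le hℓ hpolar
    (fun w => OrthogonalToDegreeLT.exists_mem_Icc_ofReal_eq_of_isRoot_derivative horth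
      (by omega) hdeg.le) hΔ hm (hmK z hz)
  rw [natDegree_derivative, natDegree_map, hdeg] at hestimate
  rw [dist_comm, dist_eq_norm]
  exact hestimate.trans_lt hnε
end
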